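/- For a connected graph G with n vertices and m edges, there exist optimal vertex sets for T⁺(G) and for T⁻(G) of size at most m - n + 1. -/

import Mathlib

open SimpleGraph

/-- The set `W` induces a path in `G`. -/
def InducesPath {V : Type*} (G : SimpleGraph V) (W : Set V) : Prop :=
  ∃ n : ℕ, Nonempty ((G.induce W) ≃g SimpleGraph.pathGraph n)

/-- The set `U` is covered by `p` vertex-disjoint induced paths of `G`. -/
def IsPathCoverOn {V : Type*} (G : SimpleGraph V) (U : Set V) (p : ℕ) : Prop :=
  ∃ parts : Fin p → Set V,
    (∀ i, (parts i).Nonempty) ∧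
    (Pairwise fun i j => Disjoint (parts i) (parts j)) ∧
    (⋃ i, parts i) = U ∧
    ∀ i, InducesPath G (parts i)

/-- The induced subgraph of `G` on `U` is a vertex-disjoint union of `p` paths. -/
def IsDisjointPathsOn {V : Type*} (G : SimpleGraph V) (U : Set V) (p : ℕ) : Prop :=
  ∃ parts : Fin p → Set V,
    (∀ i, (parts i).Nonempty) ∧
    (Pairwise fun i j => Disjoint (parts i) (parts j)) ∧
    (⋃ i, parts i) = U ∧
    (∀ i, InducesPath G (parts i)) ∧
    (∀ i j, i ≠ j → ∀ u ∈ parts i, ∀ v ∈ parts j, ¬ G.Adj u v)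

/-- The path cover number `P(G)`. -/
noncomputable def pathCoverNumber {V : Type*} (G : SimpleGraph V) : ℕ :=
  sInf {p | IsPathCoverOn G Set.univ p}

/-- `Δ(G)`: max of `p - q` over deletions of `q` vertices leaving `p` disjoint paths. -/
noncomputable def deltaLow {V : Type*} [Fintype V] (G : SimpleGraph V) : ℤ :=
  sSup {d : ℤ | ∃ (S : Finset V) (p : ℕ),
    IsDisjointPathsOn G ((↑S : Set V)ᶜ) p ∧ d = (p : ℤ) - S.card}

/-- `Δ⁺(G)`: min of `p + q` over deletions of `q` vertices leaving `p` disjoint paths. -/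
noncomputable def deltaPlus {V : Type*} [Fintype V] (G : SimpleGraph V) : ℕ :=
  sInf {k | ∃ (S : Finset V) (p : ℕ),
    IsDisjointPathsOn G ((↑S : Set V)ᶜ) p ∧ k = p + S.card}

/-- `T⁻(G)`. -/
noncomputable def Tminus {V : Type*} [Fintype V] (G : SimpleGraph V) : ℤ :=
  sSup {d : ℤ | ∃ S : Finset V, (G.induce ((↑S : Set V)ᶜ)).IsAcyclic ∧
    d = (pathCoverNumber (G.induce ((↑S : Set V)ᶜ)) : ℤ) - S.card}

/-- `T⁺(G)`. -/
noncomputable def Tplus {V : Type*} [Fintype V] (G : SimpleGraph V) : ℕ :=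
  sInf {k | ∃ S : Finset V, (G.induce ((↑S : Set V)ᶜ)).IsAcyclic ∧
    k = pathCoverNumber (G.induce ((↑S : Set V)ᶜ)) + S.card}

/-- `A` is a symmetric real matrix whose graph is `G`, i.e. `A ∈ S(G)`. -/
def MatchesGraph {V : Type*} [Fintype V] (G : SimpleGraph V) (A : Matrix V V ℝ) : Prop :=
  A.IsSymm ∧ ∀ i j : V, i ≠ j → (A i j ≠ 0 ↔ G.Adj i j)

/-- The nullity of a square real matrix. -/
noncomputable def matNullity {V : Type*} [Fintype V] (A : Matrix V V ℝ) : ℕ :=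
  Module.finrank ℝ (LinearMap.ker A.mulVecLin)

/-- `M(G)`: the maximum nullity (= maximum eigenvalue multiplicity). -/
noncomputable def maxNullity {V : Type*} [Fintype V] [DecidableEq V] (G : SimpleGraph V) : ℕ :=
  sSup {k | ∃ A : Matrix V V ℝ, MatchesGraph G A ∧ matNullity A = k}

/-- `mr(G)`: the minimum rank. -/
noncomputable def minRank {V : Type*} [Fintype V] [DecidableEq V] (G : SimpleGraph V) : ℕ :=
  sInf {k | ∃ A : Matrix V V ℝ, MatchesGraph G A ∧ A.rank = k}

/-- Vertices colored by the zero forcing process started from `B`. -/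
inductive ZFClosed {V : Type*} (G : SimpleGraph V) (B : Set V) : V → Prop
  | init (v : V) (h : v ∈ B) : ZFClosed G B v
  | force (u v : V) (hu : ZFClosed G B u) (huv : G.Adj u v)
      (hforce : ∀ w, G.Adj u w → w ≠ v → ZFClosed G B w) : ZFClosed G B v

/-- `B` is a zero forcing set of `G`. -/
def IsZeroForcingSet {V : Type*} (G : SimpleGraph V) (B : Set V) : Prop :=
  ∀ v, ZFClosed G B v

/-- `Z(G)`: the zero forcing number. -/
noncomputable def zeroForcingNumber {V : Type*} [Fintype V] (G : SimpleGraph V) : ℕ :=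
  sInf {k | ∃ B : Finset V, IsZeroForcingSet G ↑B ∧ B.card = k}

/-- The star graph on `Fin n`: vertex `0` adjacent to all others. -/
def starGraph (n : ℕ) : SimpleGraph (Fin n) :=
  SimpleGraph.fromRel (fun i _ => i.val = 0)

/-- The wheel graph: a hub (`none`) joined to every vertex of a cycle on `Fin m`. -/
def wheelGraph (m : ℕ) : SimpleGraph (Option (Fin m)) :=
  SimpleGraph.fromRel (fun u v =>
    match u, v with
    | none, some _ => True
    | some i, some j => j.val = (i.val + 1) % m
    | _, _ => False)

/-- The `n`-sun: a cycle on `Fin n` (the `inl` vertices) with a pendant vertex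
(`inr i`) attached to each cycle vertex (`inl i`). -/
def sunGraph (n : ℕ) : SimpleGraph (Fin n ⊕ Fin n) :=
  SimpleGraph.fromRel (fun u v =>
    match u, v with
    | .inl i, .inl j => j.val = (i.val + 1) % n
    | .inl i, .inr j => i = j
    | _, _ => False)

/-!
Shrink an optimal set to an inclusion-minimal feedback vertex set `S`. Putting one vertex back
into the forest raises the path cover number by at most one (the vertex is a path of its own),
and removing one raises it by at most one (its path splits in two), so `S` is still optimal for
both `T⁺` and `T⁻`. Minimality gives every `v ∈ S` a cycle meeting `S` only in `v`. Deleting an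
edge of that cycle at `v` keeps `G` connected and leaves `S` or `S \ {v}` minimal, so induction
on the number of edges gives `n + |S| ≤ m + 1`.
-/

section PathCovers

variable {V : Type*} {G : SimpleGraph V}

noncomputable def pathCoverNumberOn (G : SimpleGraph V) (U : Set V) : ℕ :=
  sInf {p | IsPathCoverOn G U p}

noncomputable def SimpleGraph.induceInduceIso (U : Set V) (X : Set U) :
    (G.induce U).induce X ≃g G.induce (Subtype.val '' X) where
  toEquiv := Equiv.Set.image Subtype.val X Subtype.val_injective
  map_rel_iff' := by simp

theorem inducesPath_induce_iff {U : Set V} {X : Set U} :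
    InducesPath (G.induce U) X ↔ InducesPath G (Subtype.val '' X) := by
  constructor
  · rintro ⟨n, ⟨f⟩⟩
    exact ⟨n, ⟨(induceInduceIso U X).symm.trans f⟩⟩
  · rintro ⟨n, ⟨f⟩⟩
    exact ⟨n, ⟨(induceInduceIso U X).trans f⟩⟩

theorem isPathCoverOn_induce_univ_iff {U : Set V} {p : ℕ} :
    IsPathCoverOn (G.induce U) Set.univ p ↔ IsPathCoverOn G U p := by
  constructor
  · rintro ⟨parts, hne, hdis, hun, hpath⟩
    refine ⟨fun i => Subtype.val '' parts i, fun i => (hne i).image _, ?_, ?_,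
      fun i => inducesPath_induce_iff.mp (hpath i)⟩
    · exact fun i j hij => (Set.disjoint_image_iff Subtype.val_injective).mpr (hdis hij)
    · rw [← Set.image_iUnion, hun, Subtype.coe_image_univ]
  · rintro ⟨parts, hne, hdis, hun, hpath⟩
    have hsub : ∀ i, parts i ⊆ U := fun i => hun ▸ Set.subset_iUnion parts i
    refine ⟨fun i => Subtype.val ⁻¹' parts i, fun i => ?_, fun i j hij => (hdis hij).preimage _,
      ?_, fun i => ?_⟩
    · obtain ⟨x, hx⟩ := hne i
      exact ⟨⟨x, hsub i hx⟩, hx⟩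
    · rw [← Set.preimage_iUnion, hun, Subtype.coe_preimage_self]
    · rw [inducesPath_induce_iff, Subtype.image_preimage_coe,
        Set.inter_eq_self_of_subset_right (hsub i)]
      exact hpath i

theorem pathCoverNumber_induce (U : Set V) :
    pathCoverNumber (G.induce U) = pathCoverNumberOn G U := by
  simp only [pathCoverNumber, pathCoverNumberOn, isPathCoverOn_induce_univ_iff]

theorem exists_isPathCoverOn_le_card {ι : Type*} [Finite ι] {parts : ι → Set V} {U : Set V}
    (hdis : Pairwise fun i j => Disjoint (parts i) (parts j)) (hU : ⋃ i, parts i = U)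
    (hpath : ∀ i, InducesPath G (parts i)) :
    ∃ p ≤ Nat.card ι, IsPathCoverOn G U p := by
  set J : Type _ := {i // (parts i).Nonempty}
  let e : J ≃ Fin (Nat.card J) := Finite.equivFin J
  refine ⟨Nat.card J, Finite.card_subtype_le _, fun k => parts (e.symm k), fun k => (e.symm k).2,
    hdis.comp_of_injective (Subtype.val_injective.comp e.symm.injective), ?_,
    fun k => hpath _⟩
  rw [← hU]
  ext x
  simp only [Set.mem_iUnion]
  constructor
  · rintro ⟨k, hk⟩
    exact ⟨_, hk⟩
  · rintro ⟨i, hi⟩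
    exact ⟨e ⟨i, x, hi⟩, by simpa using hi⟩

theorem pathCoverNumberOn_le_card {ι : Type*} [Finite ι] {parts : ι → Set V} {U : Set V}
    (hdis : Pairwise fun i j => Disjoint (parts i) (parts j)) (hU : ⋃ i, parts i = U)
    (hpath : ∀ i, InducesPath G (parts i)) :
    pathCoverNumberOn G U ≤ Nat.card ι :=
  have ⟨_, hp, hcover⟩ := exists_isPathCoverOn_le_card hdis hU hpath
  (Nat.sInf_le hcover).trans hp

theorem inducesPath_singleton (G : SimpleGraph V) (x : V) : InducesPath G {x} :=
  ⟨1, ⟨⟨Equiv.ofUnique _ _, fun {a b} => by simp [Subsingleton.elim a b]⟩⟩⟩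

theorem exists_isPathCoverOn_finset (G : SimpleGraph V) (D : Finset V) :
    ∃ p ≤ D.card, IsPathCoverOn G D p := by
  simpa using exists_isPathCoverOn_le_card (ι := D) (parts := fun x => {x.1})
    (fun _ _ h => Set.disjoint_singleton.mpr (Subtype.val_injective.ne h)) (by simp)
    (fun x => inducesPath_singleton G x.1)

theorem pathCoverNumberOn_le_card_finset (D : Finset V) :
    pathCoverNumberOn G D ≤ D.card :=
  have ⟨_, hp, hcover⟩ := exists_isPathCoverOn_finset G D
  (Nat.sInf_le hcover).trans hp

theorem isPathCoverOn_pathCoverNumberOn [Finite V] (G : SimpleGraph V) (U : Set V) :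
    IsPathCoverOn G U (pathCoverNumberOn G U) := by
  obtain ⟨p, -, hcover⟩ := exists_isPathCoverOn_finset G (Set.toFinite U).toFinset
  rw [Set.Finite.coe_toFinset] at hcover
  exact Nat.sInf_mem (s := {p | IsPathCoverOn G U p}) ⟨p, hcover⟩

theorem pathCoverNumberOn_union_le [Finite V] {U X : Set V} (h : Disjoint U X) :
    pathCoverNumberOn G (U ∪ X) ≤ pathCoverNumberOn G U + pathCoverNumberOn G X := by
  obtain ⟨parts₁, -, hdis₁, hU, hpath₁⟩ := isPathCoverOn_pathCoverNumberOn G U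
  obtain ⟨parts₂, -, hdis₂, hX, hpath₂⟩ := isPathCoverOn_pathCoverNumberOn G X
  have hdis : Pairwise fun i j =>
      Disjoint (Sum.elim parts₁ parts₂ i) (Sum.elim parts₁ parts₂ j) := by
    have hcross : ∀ i j, Disjoint (parts₁ i) (parts₂ j) := fun i j =>
      h.mono (hU ▸ Set.subset_iUnion parts₁ i) (hX ▸ Set.subset_iUnion parts₂ j)
    rintro (i | i) (j | j) hij
    · exact hdis₁ fun h => hij (congrArg _ h)
    · exact hcross i j
    · exact (hcross j i).symm
    · exact hdis₂ fun h => hij (congrArg _ h)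
  simpa using pathCoverNumberOn_le_card hdis (by rw [Set.iUnion_sumElim, hU, hX])
    (Sum.rec hpath₁ hpath₂)

theorem pathCoverNumberOn_le_one {W : Set V} (hW : InducesPath G W) :
    pathCoverNumberOn G W ≤ 1 := by
  simpa using pathCoverNumberOn_le_card (ι := Unit) (parts := fun _ => W)
    (Subsingleton.pairwise) (Set.iUnion_const W) (fun _ => hW)

theorem InducesPath.image {W : Type*} {H : SimpleGraph W} {I : Set W} (hI : InducesPath H I)
    (e : H ≃g G) : InducesPath G (e '' I) :=
  have ⟨n, ⟨f⟩⟩ := hI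
  ⟨n, ⟨(e.induce (e.injective.injOn.bijOn_image)).symm.trans f⟩⟩

theorem inducesPath_pathGraph_interval {n : ℕ} (a b : ℕ) (hb : b ≤ n) :
    InducesPath (pathGraph n) {j | a ≤ j.val ∧ j.val < b} :=
  ⟨b - a, ⟨{
    toFun := fun x => ⟨x.1.val - a, by have := x.2; simp only [Set.mem_ofPred_eq] at this; omega⟩
    invFun := fun y => ⟨⟨y.val + a, by omega⟩, by simp only [Set.mem_ofPred_eq]; omega⟩
    left_inv := fun x => by have := x.2; simp only [Set.mem_ofPred_eq] at this; ext; simp; omega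
    right_inv := fun y => by ext; simp
    map_rel_iff' := fun {x y} => by
      have := x.2; have := y.2
      simp only [Set.mem_ofPred_eq] at *
      simp only [Equiv.coe_fn_mk, pathGraph_adj, comap_adj, Function.Embedding.coe_subtype]
      omega }⟩⟩

theorem InducesPath.exists_split {W : Set V} (hW : InducesPath G W) {v : V} (hv : v ∈ W) :
    ∃ A B : Set V, InducesPath G A ∧ InducesPath G B ∧ Disjoint A B ∧ A ∪ B = W \ {v} := by
  obtain ⟨n, ⟨f⟩⟩ := hW
  set t := (f ⟨v, hv⟩).val
  have piece : ∀ a b, b ≤ n →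
      InducesPath G (Subtype.val '' (f.symm '' {j | a ≤ j.val ∧ j.val < b})) := fun a b hb =>
    inducesPath_induce_iff.mp ((inducesPath_pathGraph_interval a b hb).image f.symm)
  refine ⟨_, _, piece 0 t (f ⟨v, hv⟩).isLt.le, piece (t + 1) n le_rfl, ?_, ?_⟩
  · rw [Set.disjoint_image_iff Subtype.val_injective,
      Set.disjoint_image_iff f.symm.injective, Set.disjoint_left]
    intro j hj hj'
    simp only [Set.mem_ofPred_eq] at hj hj'
    omega
  · have hmem : ∀ x (I : Set (Fin n)),
        x ∈ Subtype.val '' (f.symm '' I) ↔ ∃ h : x ∈ W, f ⟨x, h⟩ ∈ I := fun x I => by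
      constructor
      · rintro ⟨_, ⟨j, hj, rfl⟩, rfl⟩
        exact ⟨(f.symm j).2, by simpa using hj⟩
      · rintro ⟨h, hI⟩
        exact ⟨_, ⟨f ⟨x, h⟩, hI, rfl⟩, by simp⟩
    ext x
    simp only [Set.mem_union, hmem, Set.mem_sdiff, Set.mem_singleton_iff, Set.mem_ofPred_eq]
    constructor
    · rintro (⟨hx, hlt⟩ | ⟨hx, hgt⟩) <;> refine ⟨hx, ?_⟩ <;> rintro rfl <;> omega
    · rintro ⟨hx, hxv⟩
      have : (f ⟨x, hx⟩).val ≠ t := fun h =>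
        hxv (congrArg Subtype.val (f.injective (Fin.ext h)))
      rcases lt_or_gt_of_ne this with hlt | hgt
      · exact Or.inl ⟨hx, by omega⟩
      · exact Or.inr ⟨hx, by omega⟩

theorem pathCoverNumberOn_diff_singleton_le [Finite V] (U : Set V) (v : V) :
    pathCoverNumberOn G (U \ {v}) ≤ pathCoverNumberOn G U + 1 := by
  by_cases hv : v ∈ U
  swap
  · rw [Set.sdiff_singleton_eq_self hv]; omega
  obtain ⟨parts, -, hdis, hU, hpath⟩ := isPathCoverOn_pathCoverNumberOn G U
  obtain ⟨i₀, hv₀⟩ := Set.mem_iUnion.mp (hU ▸ hv)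
  obtain ⟨A, B, hA, hB, hAB, hsplit⟩ := (hpath i₀).exists_split hv₀
  have hrest : pathCoverNumberOn G (U \ parts i₀) ≤ pathCoverNumberOn G U - 1 := by
    have hcover : ⋃ i : {i // i ≠ i₀}, parts i = U \ parts i₀ := by
      ext x
      simp only [Set.mem_iUnion, Set.mem_sdiff, ← hU]
      constructor
      · rintro ⟨i, hi⟩
        exact ⟨⟨i, hi⟩, Set.disjoint_left.mp (hdis i.2) hi⟩
      · rintro ⟨⟨i, hi⟩, hi₀⟩
        exact ⟨⟨i, fun h => hi₀ (h ▸ hi)⟩, hi⟩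
    simpa using pathCoverNumberOn_le_card (hdis.comp_of_injective Subtype.val_injective) hcover
      (fun i => hpath i)
  have hdecomp : U \ {v} = (U \ parts i₀) ∪ (A ∪ B) := by
    have hsub : parts i₀ ⊆ U := hU ▸ Set.subset_iUnion parts i₀
    rw [hsplit]
    ext x
    have := @hsub x
    have : x = v → x ∈ parts i₀ := (· ▸ hv₀)
    simp only [Set.mem_sdiff, Set.mem_union, Set.mem_singleton_iff]
    tauto
  have hAB_sub : A ∪ B ⊆ parts i₀ := hsplit ▸ Set.sdiff_subset
  calc pathCoverNumberOn G (U \ {v})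
      ≤ pathCoverNumberOn G (U \ parts i₀) + (pathCoverNumberOn G A + pathCoverNumberOn G B) := by
        rw [hdecomp]
        refine (pathCoverNumberOn_union_le (Set.disjoint_sdiff_left.mono_right hAB_sub)).trans ?_
        grw [pathCoverNumberOn_union_le hAB]
    _ ≤ (pathCoverNumberOn G U - 1) + (1 + 1) := by
        grw [hrest, pathCoverNumberOn_le_one hA, pathCoverNumberOn_le_one hB]
    _ = pathCoverNumberOn G U + 1 := by have := i₀.pos; omega

theorem pathCoverNumberOn_diff_finset_le [Finite V] [DecidableEq V] (U : Set V) (D : Finset V) :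
    pathCoverNumberOn G (U \ D) ≤ pathCoverNumberOn G U + D.card := by
  induction D using Finset.induction_on with
  | empty => simp
  | @insert a D ha ih =>
    have : U \ ↑(insert a D) = (U \ ↑D) \ {a} := by
      ext x
      simp only [Finset.coe_insert, Set.mem_sdiff, Set.mem_insert_iff, Set.mem_singleton_iff]
      tauto
    rw [this, Finset.card_insert_of_notMem ha]
    grw [pathCoverNumberOn_diff_singleton_le, ih]
    omega

end PathCovers

namespace SimpleGraph

variable {V : Type*} {G : SimpleGraph V}

def IsFeedbackVertexSet (G : SimpleGraph V) (S : Set V) : Prop :=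
  (G.induce Sᶜ).IsAcyclic

theorem isFeedbackVertexSet_iff {S : Set V} :
    G.IsFeedbackVertexSet S ↔ ∀ ⦃u : V⦄ (c : G.Walk u u), c.IsCycle → ∃ x ∈ c.support, x ∈ S := by
  constructor
  · intro h u c hc
    by_contra! hcS
    have hc' : (c.induce Sᶜ hcS).IsCycle := by
      rw [← Walk.isCycle_map_iff_of_injective (f := (Embedding.induce Sᶜ).toHom)
        Subtype.val_injective, Walk.map_induce]
      exact hc
    exact h _ hc'
  · intro h u c hc
    obtain ⟨x, hx, hxS⟩ := h _ (hc.map (f := (Embedding.induce Sᶜ).toHom) Subtype.val_injective)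
    rw [Walk.support_map, List.mem_map] at hx
    obtain ⟨y, -, rfl⟩ := hx
    exact y.2 hxS

theorem IsFeedbackVertexSet.mono {S T : Set V} (hS : G.IsFeedbackVertexSet S) (hST : S ⊆ T) :
    G.IsFeedbackVertexSet T :=
  hS.embedding (G.induceHomOfLE (Set.compl_subset_compl.mpr hST))

theorem IsFeedbackVertexSet.anti {H : SimpleGraph V} {S : Set V} (hS : G.IsFeedbackVertexSet S)
    (hHG : H ≤ G) : H.IsFeedbackVertexSet S :=
  IsAcyclic.anti (comap_monotone _ hHG) hS

theorem induce_deleteEdges_of_mem {S : Set V} {v w : V} (hv : v ∈ S) :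
    (G.deleteEdges {s(v, w)}).induce Sᶜ = G.induce Sᶜ := by
  ext a b
  simp only [comap_adj, Function.Embedding.coe_subtype, deleteEdges_adj, Set.mem_singleton_iff,
    and_iff_left_iff_imp]
  rintro - h
  rw [Sym2.eq_iff] at h
  rcases h with ⟨rfl, -⟩ | ⟨-, rfl⟩
  · exact a.2 hv
  · exact b.2 hv

theorem IsFeedbackVertexSet.exists_cycle_edge [DecidableEq V] {S : Finset V} {v : V}
    (hS : G.IsFeedbackVertexSet S) (hv : ¬ G.IsFeedbackVertexSet ↑(S.erase v)) :
    ∃ (w u : V) (c : G.Walk u u), c.IsCycle ∧ s(v, w) ∈ c.edges := by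
  simp only [isFeedbackVertexSet_iff, not_forall, not_exists, not_and] at hS hv
  obtain ⟨u, c, hc, hcS⟩ := hv
  obtain ⟨x, hx, hxS⟩ := hS c hc
  have hvc : v ∈ c.support := by
    by_contra hvc
    exact hcS x hx (Finset.mem_erase.mpr ⟨fun h => hvc (h ▸ hx), hxS⟩)
  obtain ⟨e, he, hve⟩ := (Walk.mem_support_iff_exists_mem_edges_of_not_nil hc.not_nil).mp hvc
  obtain ⟨w, rfl⟩ := Sym2.mem_iff_exists.mp hve
  exact ⟨w, u, c, hc, he⟩

theorem IsFeedbackVertexSet.card_add_card_le [Finite V] [DecidableEq V] {S : Finset V}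
    (hG : G.Connected) (hS : G.IsFeedbackVertexSet S)
    (hmin : ∀ v ∈ S, ¬ G.IsFeedbackVertexSet ↑(S.erase v)) :
    Nat.card V + S.card ≤ Nat.card G.edgeSet + 1 := by
  induction hm : Nat.card G.edgeSet using Nat.strong_induction_on generalizing G S with
  | _ m ih =>
  rcases S.eq_empty_or_nonempty with rfl | ⟨v, hv⟩
  · rw [IsFeedbackVertexSet, Finset.coe_empty, Set.compl_empty] at hS
    have hacyc : G.IsAcyclic := (induceUnivIso G).isAcyclic_iff.mp hS
    have := (isTree_iff_connected_and_card.mp ⟨hG, hacyc⟩).2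
    rw [Finset.card_empty]
    omega
  obtain ⟨w, u, c, hc, he⟩ := hS.exists_cycle_edge (hmin v hv)
  set G' := G.deleteEdges {s(v, w)}
  have hG' : G'.Connected :=
    hG.connected_delete_edge_of_not_isBridge fun hb => hb.notMem_edges_of_isCycle hc he
  have hm' : Nat.card G'.edgeSet + 1 = m := by
    rw [← hm, edgeSet_deleteEdges, Nat.card_coe_set_eq, Nat.card_coe_set_eq,
      Set.ncard_sdiff_singleton_add_one (c.edges_subset_edgeSet he)]
  have hS' : G'.IsFeedbackVertexSet S := hS.anti (deleteEdges_le _)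
  -- Cycles avoiding `v` survive the deletion, so each `u ≠ v` keeps its cycle avoiding `S \ {u}`.
  have hpriv : ∀ u ∈ S, u ≠ v → ¬ G'.IsFeedbackVertexSet ↑(S.erase u) := fun u hu huv => by
    rw [IsFeedbackVertexSet, induce_deleteEdges_of_mem (Finset.mem_erase.mpr ⟨huv.symm, hv⟩)]
    exact hmin u hu
  by_cases hv' : G'.IsFeedbackVertexSet ↑(S.erase v)
  · have hmin' : ∀ u ∈ S.erase v, ¬ G'.IsFeedbackVertexSet ↑((S.erase v).erase u) :=
      fun u hu h => hpriv u (Finset.mem_of_mem_erase hu) (Finset.ne_of_mem_erase hu)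
        (h.mono (Finset.coe_subset.mpr (Finset.erase_subset_erase u (S.erase_subset v))))
    have := ih _ (by omega) hG' hv' hmin' rfl
    rw [Finset.card_erase_of_mem hv] at this
    have := S.card_pos.mpr ⟨v, hv⟩
    omega
  · have hmin' : ∀ u ∈ S, ¬ G'.IsFeedbackVertexSet ↑(S.erase u) := fun u hu => by
      by_cases huv : u = v
      · exact huv ▸ hv'
      · exact hpriv u hu huv
    have := ih _ (by omega) hG' hS' hmin' rfl
    omega

theorem IsFeedbackVertexSet.exists_minimal_subset [DecidableEq V] {S₀ : Finset V}
    (hS₀ : G.IsFeedbackVertexSet S₀) :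
    ∃ S ⊆ S₀, G.IsFeedbackVertexSet S ∧ ∀ v ∈ S, ¬ G.IsFeedbackVertexSet ↑(S.erase v) := by
  obtain ⟨S, hSS₀, hS⟩ := exists_minimal_le_of_wellFoundedLT
    (fun S : Finset V => G.IsFeedbackVertexSet S) S₀ hS₀
  exact ⟨S, hSS₀, hS.prop, fun v hv => hS.not_prop_of_lt (Finset.erase_ssubset hv)⟩

theorem IsFeedbackVertexSet.card_le [Fintype V] [DecidableEq V] [DecidableRel G.Adj]
    {S : Finset V} (hG : G.Connected) (hS : G.IsFeedbackVertexSet S) (hmin : ∀ v ∈ S, ¬ G.IsFeedbackVertexSet ↑(S.erase v)) :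
    (S.card : ℤ) ≤ (G.edgeFinset.card : ℤ) - Fintype.card V + 1 := by
  have := hS.card_add_card_le hG hmin
  rw [Nat.card_eq_fintype_card, Nat.card_eq_fintype_card, ← edgeFinset_card] at this
  omega

end SimpleGraph

section Optimal

variable {V : Type*} [Fintype V] {G : SimpleGraph V}

theorem isFeedbackVertexSet_univ (G : SimpleGraph V) :
    G.IsFeedbackVertexSet ↑(Finset.univ : Finset V) :=
  fun v _ _ => v.2 (Finset.mem_coe.mpr (Finset.mem_univ _))

theorem tplus_le {S : Finset V} (hS : G.IsFeedbackVertexSet S) :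
    Tplus G ≤ pathCoverNumber (G.induce (↑S)ᶜ) + S.card :=
  Nat.sInf_le ⟨S, hS, rfl⟩

theorem exists_tplus_eq (G : SimpleGraph V) :
    ∃ S : Finset V, G.IsFeedbackVertexSet S ∧
      Tplus G = pathCoverNumber (G.induce (↑S)ᶜ) + S.card :=
  Nat.sInf_mem (show Set.Nonempty {k | ∃ S : Finset V, G.IsFeedbackVertexSet S ∧
    k = pathCoverNumber (G.induce (↑S)ᶜ) + S.card} from
    ⟨_, Finset.univ, isFeedbackVertexSet_univ G, rfl⟩)

theorem finite_tminus_set (G : SimpleGraph V) :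
    {d : ℤ | ∃ S : Finset V, G.IsFeedbackVertexSet S ∧
      d = (pathCoverNumber (G.induce (↑S)ᶜ) : ℤ) - S.card}.Finite :=
  (Set.finite_range fun S : Finset V => (pathCoverNumber (G.induce (↑S)ᶜ) : ℤ) - S.card).subset
    (by rintro _ ⟨S, -, rfl⟩; exact ⟨S, rfl⟩)

theorem le_tminus {S : Finset V} (hS : G.IsFeedbackVertexSet S) :
    (pathCoverNumber (G.induce (↑S)ᶜ) : ℤ) - S.card ≤ Tminus G :=
  le_csSup (finite_tminus_set G).bddAbove ⟨S, hS, rfl⟩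

theorem exists_tminus_eq (G : SimpleGraph V) :
    ∃ S : Finset V, G.IsFeedbackVertexSet S ∧
      Tminus G = (pathCoverNumber (G.induce (↑S)ᶜ) : ℤ) - S.card :=
  Set.Nonempty.csSup_mem (show Set.Nonempty {d : ℤ | ∃ S : Finset V, G.IsFeedbackVertexSet S ∧
    d = (pathCoverNumber (G.induce (↑S)ᶜ) : ℤ) - S.card} from
    ⟨_, Finset.univ, isFeedbackVertexSet_univ G, rfl⟩) (finite_tminus_set G)

theorem pathCoverNumber_add_card_le_of_subset [DecidableEq V] {S S₀ : Finset V} (h : S ⊆ S₀) :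
    pathCoverNumber (G.induce (↑S)ᶜ) + S.card ≤ pathCoverNumber (G.induce (↑S₀)ᶜ) + S₀.card := by
  have hsplit : (↑S : Set V)ᶜ = (↑S₀)ᶜ ∪ ↑(S₀ \ S) := by
    ext x
    have := @h x
    simp only [Set.mem_compl_iff, Finset.mem_coe, Set.mem_union, Finset.coe_sdiff, Set.mem_sdiff]
    tauto
  have hdisj : Disjoint (↑S₀ : Set V)ᶜ ↑(S₀ \ S) :=
    Set.disjoint_compl_left_iff_subset.mpr (by simp)
  rw [pathCoverNumber_induce, pathCoverNumber_induce, hsplit,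
    ← Finset.card_sdiff_add_card_eq_card h]
  grw [pathCoverNumberOn_union_le hdisj, pathCoverNumberOn_le_card_finset]
  omega

theorem pathCoverNumber_sub_card_le_of_subset [DecidableEq V] {S S₀ : Finset V} (h : S ⊆ S₀) :
    (pathCoverNumber (G.induce (↑S₀)ᶜ) : ℤ) - S₀.card ≤
      (pathCoverNumber (G.induce (↑S)ᶜ) : ℤ) - S.card := by
  have hsplit : (↑S₀ : Set V)ᶜ = (↑S)ᶜ \ ↑(S₀ \ S) := by
    ext x
    have := @h x
    simp only [Set.mem_compl_iff, Finset.mem_coe, Finset.coe_sdiff, Set.mem_sdiff]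
    tauto
  have := pathCoverNumberOn_diff_finset_le (G := G) (↑S)ᶜ (S₀ \ S)
  rw [← hsplit, ← pathCoverNumber_induce, ← pathCoverNumber_induce] at this
  have := Finset.card_sdiff_add_card_eq_card h
  omega

end Optimal

theorem exists_small_optimal_sets {V : Type*} [Fintype V] [DecidableEq V]
    (G : SimpleGraph V) [DecidableRel G.Adj] (hG : G.Connected) :
    (∃ S : Finset V, (G.induce ((↑S : Set V)ᶜ)).IsAcyclic ∧
      Tplus G = pathCoverNumber (G.induce ((↑S : Set V)ᶜ)) + S.card ∧
      (S.card : ℤ) ≤ (G.edgeFinset.card : ℤ) - Fintype.card V + 1) ∧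
    (∃ S : Finset V, (G.induce ((↑S : Set V)ᶜ)).IsAcyclic ∧
      Tminus G = (pathCoverNumber (G.induce ((↑S : Set V)ᶜ)) : ℤ) - S.card ∧
      (S.card : ℤ) ≤ (G.edgeFinset.card : ℤ) - Fintype.card V + 1) := by
  constructor
  · obtain ⟨S₀, hS₀, hT⟩ := exists_tplus_eq G
    obtain ⟨S, hSS₀, hS, hmin⟩ := hS₀.exists_minimal_subset
    exact ⟨S, hS, (tplus_le hS).antisymm (hT ▸ pathCoverNumber_add_card_le_of_subset hSS₀),
      hS.card_le hG hmin⟩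
  · obtain ⟨S₀, hS₀, hT⟩ := exists_tminus_eq G
    obtain ⟨S, hSS₀, hS, hmin⟩ := hS₀.exists_minimal_subset
    exact ⟨S, hS, (hT ▸ pathCoverNumber_sub_card_le_of_subset hSS₀).antisymm (le_tminus hS),
      hS.card_le hG hmin⟩
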